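/- Let k be a positive integer such that k ≠ m², k ≠ 2m², k ≠ 3m², and k ≠ 4m² for every positive integer m. Then 384·L₄(k) = N₄(k) − 192·L₁,₁,₂(k) − 192·L₃(k) − 48·L₂(k) − 96·L₁,₂(k) − 64·L₁,₃(k) − 96·L₂(k/2), where L₂(k/2) is interpreted as 0 when k is odd. -/

import Mathlib

noncomputable def N4 (k : ℕ) : ℕ := {q : ℤ × ℤ × ℤ × ℤ | q.1 ^ 2 + q.2.1 ^ 2 + q.2.2.1 ^ 2 + q.2.2.2 ^ 2 = (k : ℤ)}.ncard

noncomputable def L4 (k : ℕ) : ℕ := {q : ℕ × ℕ × ℕ × ℕ | 0 < q.1 ∧ q.1 < q.2.1 ∧ q.2.1 < q.2.2.1 ∧ q.2.2.1 < q.2.2.2 ∧ q.1 ^ 2 + q.2.1 ^ 2 + q.2.2.1 ^ 2 + q.2.2.2 ^ 2 = k}.ncard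

noncomputable def L112 (k : ℕ) : ℕ := {t : ℕ × ℕ × ℕ | 0 < t.1 ∧ 0 < t.2.2 ∧ t.1 < t.2.1 ∧ t.1 ≠ t.2.2 ∧ t.2.1 ≠ t.2.2 ∧ t.1 ^ 2 + t.2.1 ^ 2 + 2 * t.2.2 ^ 2 = k}.ncard

noncomputable def L3 (k : ℕ) : ℕ := {t : ℕ × ℕ × ℕ | 0 < t.1 ∧ t.1 < t.2.1 ∧ t.2.1 < t.2.2 ∧ t.1 ^ 2 + t.2.1 ^ 2 + t.2.2 ^ 2 = k}.ncard

noncomputable def L2 (k : ℕ) : ℕ := {p : ℕ × ℕ | 0 < p.1 ∧ p.1 < p.2 ∧ p.1 ^ 2 + p.2 ^ 2 = k}.ncard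

noncomputable def L12 (k : ℕ) : ℕ := {p : ℕ × ℕ | 0 < p.1 ∧ 0 < p.2 ∧ p.1 ≠ p.2 ∧ p.1 ^ 2 + 2 * p.2 ^ 2 = k}.ncard

noncomputable def L13 (k : ℕ) : ℕ := {p : ℕ × ℕ | 0 < p.1 ∧ 0 < p.2 ∧ p.1 ≠ p.2 ∧ p.1 ^ 2 + 3 * p.2 ^ 2 = k}.ncard

noncomputable def L2half (k : ℕ) : ℕ := if k % 2 = 0 then L2 (k / 2) else 0

/-!
Group the integer solutions of `x² + y² + z² + v² = k` by the multiset of absolute values of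
their coordinates. When `k` is not of the form `m²`, `2m²`, `3m²`, `4m²`, this multiset has one of
the seven shapes `{x,y,z,v}`, `{x,y,z,z}`, `{x,x,y,y}`, `{x,y,y,y}`, `{0,x,y,z}`, `{0,x,y,y}`,
`{0,0,x,y}` with distinct positive letters, and the multisets of each shape are parametrised by
the set counted by `L4`, `L112`, `L2 (k/2)`, `L13`, `L3`, `L12`, `L2` respectively. Relabelling the
values by an injection of `ℕ` fixing `0` maps fibres bijectively onto fibres, so the number of
integer points over a multiset only depends on its shape; on a small representative it is
found by enumeration to be `384, 192, 96, 64, 192, 96, 48` (orderings times sign choices).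
-/

open Function Set

def absValues (q : ℤ × ℤ × ℤ × ℤ) : Multiset ℕ :=
  ↑[q.1.natAbs, q.2.1.natAbs, q.2.2.1.natAbs, q.2.2.2.natAbs]

def sumSq (m : Multiset ℕ) : ℕ := (m.map (· ^ 2)).sum

lemma sum_sq_eq_sumSq_absValues (q : ℤ × ℤ × ℤ × ℤ) :
    q.1 ^ 2 + q.2.1 ^ 2 + q.2.2.1 ^ 2 + q.2.2.2 ^ 2 = (sumSq (absValues q) : ℤ) := by
  simp [sumSq, absValues, add_assoc]

lemma le_sumSq_of_mem {m : Multiset ℕ} {v : ℕ} (hv : v ∈ m) : v ≤ sumSq m :=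
  (Nat.le_self_pow two_ne_zero v).trans
    (Multiset.le_sum_of_mem (Multiset.mem_map_of_mem (· ^ 2) hv))

section Relabel

variable {f : ℕ → ℕ}

def signedMap (f : ℕ → ℕ) (z : ℤ) : ℤ := z.sign * f z.natAbs

lemma natAbs_signedMap (hf0 : f 0 = 0) (z : ℤ) : (signedMap f z).natAbs = f z.natAbs := by
  rcases eq_or_ne z 0 with rfl | hz
  · simp [signedMap, hf0]
  · simp [signedMap, Int.natAbs_mul, Int.natAbs_sign_of_ne_zero hz]

lemma signedMap_injective (hf : Injective f) (hf0 : f 0 = 0) : Injective (signedMap f) := by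
  intro z w h
  have habs : z.natAbs = w.natAbs := hf (by rw [← natAbs_signedMap hf0, h, natAbs_signedMap hf0])
  rcases eq_or_ne z 0 with rfl | hz
  · exact (Int.natAbs_eq_zero.1 habs.symm).symm
  have hfz : (f z.natAbs : ℤ) ≠ 0 := by
    rw [Nat.cast_ne_zero, ← hf0, hf.ne_iff]; simpa using hz
  have hsign : z.sign = w.sign := by
    unfold signedMap at h; rw [← habs] at h; exact mul_right_cancel₀ hfz h
  rw [← Int.sign_mul_natAbs z, ← Int.sign_mul_natAbs w, hsign, habs]

lemma mem_range_signedMap (hf0 : f 0 = 0) {z : ℤ} (h : z.natAbs ∈ range f) :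
    z ∈ range (signedMap f) := by
  obtain ⟨v, hv⟩ := h
  rcases eq_or_ne z 0 with rfl | hz
  · exact ⟨0, by simp [signedMap]⟩
  have hv0 : v ≠ 0 := by rintro rfl; simp_all
  refine ⟨z.sign * v, ?_⟩
  have : (z.sign * v).sign = z.sign := by
    rw [Int.sign_mul, Int.sign_natCast_of_ne_zero hv0, mul_one, Int.sign_sign]
  simp only [signedMap, this, Int.natAbs_mul, Int.natAbs_sign_of_ne_zero hz, Int.natAbs_natCast,
    one_mul, hv, Int.sign_mul_natAbs]

def signedMap4 (f : ℕ → ℕ) (q : ℤ × ℤ × ℤ × ℤ) : ℤ × ℤ × ℤ × ℤ :=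
  (signedMap f q.1, signedMap f q.2.1, signedMap f q.2.2.1, signedMap f q.2.2.2)

lemma absValues_signedMap4 (hf0 : f 0 = 0) (q : ℤ × ℤ × ℤ × ℤ) :
    absValues (signedMap4 f q) = (absValues q).map f := by
  simp [absValues, signedMap4, natAbs_signedMap hf0]

theorem ncard_absValues_eq_map (hf : Injective f) (hf0 : f 0 = 0) (m : Multiset ℕ) :
    {q | absValues q = m.map f}.ncard = {q | absValues q = m}.ncard := by
  have hinj : Injective (signedMap4 f) := by
    rintro ⟨a, b, c, d⟩ ⟨a', b', c', d'⟩ h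
    simp only [signedMap4, Prod.mk.injEq, (signedMap_injective hf hf0).eq_iff] at h
    simp [h]
  rw [← ncard_preimage_of_injective_subset_range hinj]
  · congr 1
    ext q
    simp [absValues_signedMap4 hf0, (Multiset.map_injective hf).eq_iff]
  · rintro ⟨a, b, c, d⟩ (hq : absValues _ = _)
    have hmem : ∀ z ∈ absValues (a, b, c, d), z ∈ range f := by
      rw [hq]; intro z hz
      obtain ⟨v, -, rfl⟩ := Multiset.mem_map.1 hz
      exact mem_range_self v
    obtain ⟨a', rfl⟩ := mem_range_signedMap hf0 (hmem a.natAbs (by simp [absValues]))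
    obtain ⟨b', rfl⟩ := mem_range_signedMap hf0 (hmem b.natAbs (by simp [absValues]))
    obtain ⟨c', rfl⟩ := mem_range_signedMap hf0 (hmem c.natAbs (by simp [absValues]))
    obtain ⟨d', rfl⟩ := mem_range_signedMap hf0 (hmem d.natAbs (by simp [absValues]))
    exact ⟨(a', b', c', d'), rfl⟩

end Relabel

-- Fixes `0` and sends `i + 1` to `l[i]`; arguments past the end of `l` are sent beyond `l.sum`,
-- which keeps the map injective.
def listRelabel (l : List ℕ) (n : ℕ) : ℕ :=
  if n = 0 then 0 else if h : n - 1 < l.length then l[n - 1] else n + l.sum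

lemma listRelabel_injective {l : List ℕ} (hl : l.Nodup) (hpos : ∀ v ∈ l, 0 < v) :
    Injective (listRelabel l) := by
  have hmem {i : ℕ} (hi : i < l.length) : 0 < l[i] ∧ l[i] ≤ l.sum :=
    ⟨hpos _ (l.getElem_mem hi), List.le_sum_of_mem (l.getElem_mem hi)⟩
  intro n n' h
  unfold listRelabel at h
  split_ifs at h <;> first
    | omega
    | (have := hl.getElem_inj_iff.1 h; omega)
    | (have := hmem ‹n - 1 < l.length›; omega)
    | (have := hmem ‹n' - 1 < l.length›; omega)

noncomputable def box (N : ℕ) : Finset (ℤ × ℤ × ℤ × ℤ) :=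
  Finset.Icc (-N : ℤ) N ×ˢ Finset.Icc (-N : ℤ) N ×ˢ Finset.Icc (-N : ℤ) N ×ˢ Finset.Icc (-N : ℤ) N

lemma mem_box_of_absValues_le {q : ℤ × ℤ × ℤ × ℤ} {N : ℕ} (h : ∀ v ∈ absValues q, v ≤ N) :
    q ∈ box N := by
  obtain ⟨a, b, c, d⟩ := q
  simp only [absValues, Multiset.mem_coe, List.mem_cons, List.not_mem_nil, or_false,
    forall_eq_or_imp, forall_eq] at h
  simp only [box, Finset.mem_product, Finset.mem_Icc]
  omega

lemma ncard_fibre_map_listRelabel {l : List ℕ} (hl : l.Nodup) (hpos : ∀ v ∈ l, 0 < v)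
    {p : Multiset ℕ} {N : ℕ} (hp : ∀ v ∈ p, v ≤ N) :
    {q | absValues q = p.map (listRelabel l)}.ncard =
      ((box N).filter (absValues · = p)).card := by
  rw [ncard_absValues_eq_map (listRelabel_injective hl hpos) rfl, ← ncard_coe_finset]
  congr 1
  ext q
  simp only [mem_ofPred_eq, Finset.coe_filter, iff_and_self]
  rintro rfl
  exact mem_box_of_absValues_le hp

lemma ncard_preimage_image_of_fibres {α β γ : Type*} (μ : β → γ) (e : α → γ) {A : Set α}
    (he : InjOn e A) {c : ℕ} (hc : 0 < c) (hF : ∀ t ∈ A, {q | μ q = e t}.ncard = c) :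
    (μ ⁻¹' (e '' A)).ncard = A.ncard * c := by
  let φ : (Σ t : A, {q // μ q = e t}) → μ ⁻¹' (e '' A) := fun x => ⟨x.2, x.1, x.1.2, x.2.2.symm⟩
  have hφ : Bijective φ := by
    refine ⟨fun x y hxy => ?_, fun ⟨q, t, ht, hq⟩ => ⟨⟨⟨t, ht⟩, q, hq.symm⟩, rfl⟩⟩
    have hq : (x.2 : β) = y.2 := congrArg Subtype.val hxy
    exact Sigma.subtype_ext (Subtype.ext (he x.1.2 y.1.2 (x.2.2.symm.trans (hq ▸ y.2.2)))) hq
  have hfibre (t : A) : {q // μ q = e t} ≃ Fin c := by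
    have : Finite {q // μ q = e t} := (finite_of_ncard_pos ((hF t t.2).symm ▸ hc)).to_subtype
    exact Finite.equivFinOfCardEq (by rw [← hF t t.2, ← Nat.card_coe_set_eq]; rfl)
  rw [← Nat.card_coe_set_eq, ← Nat.card_congr (Equiv.ofBijective φ hφ),
    Nat.card_congr ((Equiv.sigmaCongrRight hfibre).trans (Equiv.sigmaEquivProd _ _)),
    Nat.card_prod, Nat.card_coe_set_eq, Nat.card_eq_fintype_card, Fintype.card_fin]

theorem N4_eq_sum_ncard {n k : ℕ} (B : Fin n → Set (Multiset ℕ)) (hB : Pairwise (Disjoint on B))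
    (hsum : ∀ i, ∀ m ∈ B i, sumSq m = k)
    (hcover : ∀ q, sumSq (absValues q) = k → ∃ i, absValues q ∈ B i) :
    N4 k = ∑ i, (absValues ⁻¹' B i).ncard := by
  have hS : {q : ℤ × ℤ × ℤ × ℤ | q.1 ^ 2 + q.2.1 ^ 2 + q.2.2.1 ^ 2 + q.2.2.2 ^ 2 = (k : ℤ)} =
      ⋃ i, absValues ⁻¹' B i := by
    ext q
    simp only [mem_ofPred_eq, sum_sq_eq_sumSq_absValues, Nat.cast_inj, mem_iUnion, mem_preimage]
    exact ⟨hcover q, fun ⟨i, hi⟩ => hsum i _ hi⟩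
  have hfin (i : Fin n) : (absValues ⁻¹' B i).Finite :=
    (box k).finite_toSet.subset fun q hq =>
      mem_box_of_absValues_le fun v hv => hsum i _ hq ▸ le_sumSq_of_mem hv
  rw [N4, hS, ncard_iUnion_of_finite hfin fun i j hij => (hB hij).preimage absValues,
    finsum_eq_sum_of_fintype]

-- The number of zero entries and the number of ordered pairs of equal entries; it separates
-- the seven shapes.
def shapeKey (m : Multiset ℕ) : ℕ × ℕ := (m.count 0, (m.map m.count).sum)

lemma pairwise_disjoint_of_key {ι α β : Type*} {B : ι → Set α} (g : α → β) (κ : ι → β)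
    (hκ : Injective κ) (h : ∀ i, ∀ m ∈ B i, g m = κ i) : Pairwise (Disjoint on B) :=
  fun i j hij => disjoint_left.2 fun m hi hj => hij (hκ ((h i m hi).symm.trans (h j m hj)))

def classL4 (k : ℕ) : Set (Multiset ℕ) :=
  (fun t : ℕ × ℕ × ℕ × ℕ => (↑[t.1, t.2.1, t.2.2.1, t.2.2.2] : Multiset ℕ)) ''
    {q | 0 < q.1 ∧ q.1 < q.2.1 ∧ q.2.1 < q.2.2.1 ∧ q.2.2.1 < q.2.2.2 ∧
      q.1 ^ 2 + q.2.1 ^ 2 + q.2.2.1 ^ 2 + q.2.2.2 ^ 2 = k}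

lemma classL4_subset (k : ℕ) : classL4 k ⊆ {m | sumSq m = k ∧ shapeKey m = (0, 4)} := by
  rintro _ ⟨⟨x, y, z, v⟩, ⟨hx, hxy, hyz, hzv, hk⟩, rfl⟩
  dsimp only at *
  refine ⟨by simp [sumSq, ← hk, add_assoc], ?_⟩
  simp (disch := omega) [shapeKey, List.count_cons, if_neg]

set_option maxRecDepth 2000 in
lemma ncard_preimage_classL4 (k : ℕ) : (absValues ⁻¹' classL4 k).ncard = L4 k * 384 := by
  refine ncard_preimage_image_of_fibres _ _ ?_ (by norm_num) ?_
  · rintro ⟨x, y, z, v⟩ ⟨hx, hxy, hyz, hzv, -⟩ ⟨x', y', z', v'⟩ ⟨hx', hxy', hyz', hzv', -⟩ h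
    dsimp only at *
    have := List.Perm.eq_of_pairwise' (r := (· ≤ ·)) (by simp; omega) (by simp; omega)
      (Multiset.coe_eq_coe.1 h)
    simp_all
  · rintro ⟨x, y, z, v⟩ ⟨hx, hxy, hyz, hzv, -⟩
    dsimp only at *
    refine (ncard_fibre_map_listRelabel (l := [x, y, z, v]) (p := ↑[1, 2, 3, 4]) (N := 4)
      (by simp; omega) (by simp; omega) (by simp)).trans ?_
    decide

def classL112 (k : ℕ) : Set (Multiset ℕ) :=
  (fun t : ℕ × ℕ × ℕ => (↑[t.1, t.2.1, t.2.2, t.2.2] : Multiset ℕ)) ''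
    {t | 0 < t.1 ∧ 0 < t.2.2 ∧ t.1 < t.2.1 ∧ t.1 ≠ t.2.2 ∧ t.2.1 ≠ t.2.2 ∧
      t.1 ^ 2 + t.2.1 ^ 2 + 2 * t.2.2 ^ 2 = k}

lemma classL112_subset (k : ℕ) : classL112 k ⊆ {m | sumSq m = k ∧ shapeKey m = (0, 6)} := by
  rintro _ ⟨⟨x, y, z⟩, ⟨hx, hz, hxy, hxz, hyz, hk⟩, rfl⟩
  dsimp only at *
  refine ⟨by simp [sumSq, ← hk]; ring, ?_⟩
  simp (disch := omega) [shapeKey, List.count_cons, if_neg]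

set_option maxRecDepth 2000 in
lemma ncard_preimage_classL112 (k : ℕ) : (absValues ⁻¹' classL112 k).ncard = L112 k * 192 := by
  refine ncard_preimage_image_of_fibres _ _ ?_ (by norm_num) ?_
  · rintro ⟨x, y, z⟩ ⟨hx, hz, hxy, hxz, hyz, -⟩ ⟨x', y', z'⟩ ⟨hx', hz', hxy', hxz', hyz', -⟩ h
    dsimp only at *
    have hcount := congrArg (Multiset.count z) h
    simp (disch := omega) [List.count_cons] at hcount
    obtain rfl : z = z' := by split_ifs at hcount <;> omega
    have := List.Perm.eq_of_pairwise' (r := (· ≤ ·)) (by simp; omega) (by simp; omega)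
      ((List.perm_append_right_iff (l₁ := [x, y]) (l₂ := [x', y']) [z, z]).1
        (Multiset.coe_eq_coe.1 h))
    simp_all
  · rintro ⟨x, y, z⟩ ⟨hx, hz, hxy, hxz, hyz, -⟩
    dsimp only at *
    refine (ncard_fibre_map_listRelabel (l := [x, y, z]) (p := ↑[1, 2, 3, 3]) (N := 3)
      (by simp; omega) (by simp; omega) (by simp)).trans ?_
    decide

lemma ncard_eq_L2half (k : ℕ) :
    {p : ℕ × ℕ | 0 < p.1 ∧ p.1 < p.2 ∧ 2 * p.1 ^ 2 + 2 * p.2 ^ 2 = k}.ncard = L2half k := by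
  unfold L2half L2
  split_ifs with hk
  · congr 1; ext ⟨x, y⟩; simp only [mem_ofPred_eq]; omega
  · convert ncard_empty (ℕ × ℕ)
    ext ⟨x, y⟩
    simp only [mem_ofPred_eq, mem_empty_iff_false, iff_false]
    omega

def classL2half (k : ℕ) : Set (Multiset ℕ) :=
  (fun t : ℕ × ℕ => (↑[t.1, t.1, t.2, t.2] : Multiset ℕ)) ''
    {p | 0 < p.1 ∧ p.1 < p.2 ∧ 2 * p.1 ^ 2 + 2 * p.2 ^ 2 = k}

lemma classL2half_subset (k : ℕ) : classL2half k ⊆ {m | sumSq m = k ∧ shapeKey m = (0, 8)} := by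
  rintro _ ⟨⟨x, y⟩, ⟨hx, hxy, hk⟩, rfl⟩
  dsimp only at *
  refine ⟨by simp [sumSq, ← hk]; ring, ?_⟩
  simp (disch := omega) [shapeKey, List.count_cons, if_neg]

lemma ncard_preimage_classL2half (k : ℕ) :
    (absValues ⁻¹' classL2half k).ncard = L2half k * 96 := by
  rw [← ncard_eq_L2half]
  refine ncard_preimage_image_of_fibres _ _ ?_ (by norm_num) ?_
  · rintro ⟨x, y⟩ ⟨hx, hxy, -⟩ ⟨x', y'⟩ ⟨hx', hxy', -⟩ h
    dsimp only at *
    have := List.Perm.eq_of_pairwise' (r := (· ≤ ·)) (by simp; omega) (by simp; omega)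
      (Multiset.coe_eq_coe.1 h)
    simp_all
  · rintro ⟨x, y⟩ ⟨hx, hxy, -⟩
    dsimp only at *
    refine (ncard_fibre_map_listRelabel (l := [x, y]) (p := ↑[1, 1, 2, 2]) (N := 2)
      (by simp; omega) (by simp; omega) (by simp)).trans ?_
    decide

def classL13 (k : ℕ) : Set (Multiset ℕ) :=
  (fun t : ℕ × ℕ => (↑[t.1, t.2, t.2, t.2] : Multiset ℕ)) ''
    {p | 0 < p.1 ∧ 0 < p.2 ∧ p.1 ≠ p.2 ∧ p.1 ^ 2 + 3 * p.2 ^ 2 = k}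

lemma classL13_subset (k : ℕ) : classL13 k ⊆ {m | sumSq m = k ∧ shapeKey m = (0, 10)} := by
  rintro _ ⟨⟨x, y⟩, ⟨hx, hy, hxy, hk⟩, rfl⟩
  dsimp only at *
  refine ⟨by simp [sumSq, ← hk]; ring, ?_⟩
  simp (disch := omega) [shapeKey, List.count_cons, if_neg]

lemma ncard_preimage_classL13 (k : ℕ) : (absValues ⁻¹' classL13 k).ncard = L13 k * 64 := by
  refine ncard_preimage_image_of_fibres _ _ ?_ (by norm_num) ?_
  · rintro ⟨x, y⟩ ⟨hx, hy, hxy, -⟩ ⟨x', y'⟩ ⟨hx', hy', hxy', -⟩ h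
    dsimp only at *
    have hcount := congrArg (Multiset.count y) h
    simp (disch := omega) [List.count_cons] at hcount
    obtain rfl : y = y' := by split_ifs at hcount <;> omega
    have := (List.perm_append_right_iff (l₁ := [x]) (l₂ := [x']) [y, y, y]).1
      (Multiset.coe_eq_coe.1 h)
    simp_all
  · rintro ⟨x, y⟩ ⟨hx, hy, hxy, -⟩
    dsimp only at *
    refine (ncard_fibre_map_listRelabel (l := [x, y]) (p := ↑[1, 2, 2, 2]) (N := 2)
      (by simp; omega) (by simp; omega) (by simp)).trans ?_
    decide

def classL3 (k : ℕ) : Set (Multiset ℕ) :=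
  (fun t : ℕ × ℕ × ℕ => (↑[0, t.1, t.2.1, t.2.2] : Multiset ℕ)) ''
    {t | 0 < t.1 ∧ t.1 < t.2.1 ∧ t.2.1 < t.2.2 ∧ t.1 ^ 2 + t.2.1 ^ 2 + t.2.2 ^ 2 = k}

lemma classL3_subset (k : ℕ) : classL3 k ⊆ {m | sumSq m = k ∧ shapeKey m = (1, 4)} := by
  rintro _ ⟨⟨x, y, z⟩, ⟨hx, hxy, hyz, hk⟩, rfl⟩
  dsimp only at *
  refine ⟨by simp [sumSq, ← hk, add_assoc], ?_⟩
  simp (disch := omega) [shapeKey, List.count_cons, if_neg]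

set_option maxRecDepth 2000 in
lemma ncard_preimage_classL3 (k : ℕ) : (absValues ⁻¹' classL3 k).ncard = L3 k * 192 := by
  refine ncard_preimage_image_of_fibres _ _ ?_ (by norm_num) ?_
  · rintro ⟨x, y, z⟩ ⟨hx, hxy, hyz, -⟩ ⟨x', y', z'⟩ ⟨hx', hxy', hyz', -⟩ h
    dsimp only at *
    have := List.Perm.eq_of_pairwise' (r := (· ≤ ·)) (by simp; omega) (by simp; omega)
      (Multiset.coe_eq_coe.1 h)
    simp_all
  · rintro ⟨x, y, z⟩ ⟨hx, hxy, hyz, -⟩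
    dsimp only at *
    refine (ncard_fibre_map_listRelabel (l := [x, y, z]) (p := ↑[0, 1, 2, 3]) (N := 3)
      (by simp; omega) (by simp; omega) (by simp)).trans ?_
    decide

def classL12 (k : ℕ) : Set (Multiset ℕ) :=
  (fun t : ℕ × ℕ => (↑[0, t.1, t.2, t.2] : Multiset ℕ)) ''
    {p | 0 < p.1 ∧ 0 < p.2 ∧ p.1 ≠ p.2 ∧ p.1 ^ 2 + 2 * p.2 ^ 2 = k}

lemma classL12_subset (k : ℕ) : classL12 k ⊆ {m | sumSq m = k ∧ shapeKey m = (1, 6)} := by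
  rintro _ ⟨⟨x, y⟩, ⟨hx, hy, hxy, hk⟩, rfl⟩
  dsimp only at *
  refine ⟨by simp [sumSq, ← hk]; ring, ?_⟩
  simp (disch := omega) [shapeKey, List.count_cons, if_neg]

lemma ncard_preimage_classL12 (k : ℕ) : (absValues ⁻¹' classL12 k).ncard = L12 k * 96 := by
  refine ncard_preimage_image_of_fibres _ _ ?_ (by norm_num) ?_
  · rintro ⟨x, y⟩ ⟨hx, hy, hxy, -⟩ ⟨x', y'⟩ ⟨hx', hy', hxy', -⟩ h
    dsimp only at *
    have hcount := congrArg (Multiset.count y) h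
    simp (disch := omega) [List.count_cons] at hcount
    obtain rfl : y = y' := by split_ifs at hcount <;> omega
    have := (List.perm_append_right_iff (l₁ := [0, x]) (l₂ := [0, x']) [y, y]).1
      (Multiset.coe_eq_coe.1 h)
    simp_all
  · rintro ⟨x, y⟩ ⟨hx, hy, hxy, -⟩
    dsimp only at *
    refine (ncard_fibre_map_listRelabel (l := [x, y]) (p := ↑[0, 1, 2, 2]) (N := 2)
      (by simp; omega) (by simp; omega) (by simp)).trans ?_
    decide

def classL2 (k : ℕ) : Set (Multiset ℕ) :=
  (fun t : ℕ × ℕ => (↑[0, 0, t.1, t.2] : Multiset ℕ)) ''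
    {p | 0 < p.1 ∧ p.1 < p.2 ∧ p.1 ^ 2 + p.2 ^ 2 = k}

lemma classL2_subset (k : ℕ) : classL2 k ⊆ {m | sumSq m = k ∧ shapeKey m = (2, 6)} := by
  rintro _ ⟨⟨x, y⟩, ⟨hx, hxy, hk⟩, rfl⟩
  dsimp only at *
  refine ⟨by simp [sumSq, ← hk], ?_⟩
  simp (disch := omega) [shapeKey, List.count_cons, if_neg]

lemma ncard_preimage_classL2 (k : ℕ) : (absValues ⁻¹' classL2 k).ncard = L2 k * 48 := by
  refine ncard_preimage_image_of_fibres _ _ ?_ (by norm_num) ?_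
  · rintro ⟨x, y⟩ ⟨hx, hxy, -⟩ ⟨x', y'⟩ ⟨hx', hxy', -⟩ h
    dsimp only at *
    have := List.Perm.eq_of_pairwise' (r := (· ≤ ·)) (by simp; omega) (by simp; omega)
      (Multiset.coe_eq_coe.1 h)
    simp_all
  · rintro ⟨x, y⟩ ⟨hx, hxy, -⟩
    dsimp only at *
    refine (ncard_fibre_map_listRelabel (l := [x, y]) (p := ↑[0, 0, 1, 2]) (N := 2)
      (by simp; omega) (by simp; omega) (by simp)).trans ?_
    decide

def shapeClass (k : ℕ) : Fin 7 → Set (Multiset ℕ) :=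
  ![classL4 k, classL112 k, classL2half k, classL13 k, classL3 k, classL12 k, classL2 k]

lemma shapeClass_subset (k : ℕ) (i : Fin 7) : shapeClass k i ⊆ {m | sumSq m = k ∧
    shapeKey m = ![(0, 4), (0, 6), (0, 8), (0, 10), (1, 4), (1, 6), (2, 6)] i} := by
  fin_cases i
  exacts [classL4_subset k, classL112_subset k, classL2half_subset k, classL13_subset k,
    classL3_subset k, classL12_subset k, classL2_subset k]

lemma exists_sorted_eq_absValues (q : ℤ × ℤ × ℤ × ℤ) :
    ∃ a b c d : ℕ, a ≤ b ∧ b ≤ c ∧ c ≤ d ∧ absValues q = ↑[a, b, c, d] := by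
  obtain ⟨a, b, c, d, hl⟩ := List.length_eq_four.1 (by simp [absValues] :
    ((absValues q).sort (· ≤ ·)).length = 4)
  have hsorted := Multiset.pairwise_sort (absValues q) (· ≤ ·)
  simp only [hl, List.pairwise_cons, List.mem_cons, List.not_mem_nil, or_false,
    forall_eq_or_imp, forall_eq] at hsorted
  exact ⟨a, b, c, d, by omega, by omega, by omega, by rw [← hl, Multiset.sort_eq]⟩

lemma exists_mem_shapeClass_of_sorted {k a b c d : ℕ} (hk : 0 < k)
    (h : ∀ m : ℕ, 0 < m → k ≠ m ^ 2 ∧ k ≠ 2 * m ^ 2 ∧ k ≠ 3 * m ^ 2 ∧ k ≠ 4 * m ^ 2)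
    (hab : a ≤ b) (hbc : b ≤ c) (hcd : c ≤ d) (hsum : a ^ 2 + b ^ 2 + c ^ 2 + d ^ 2 = k) :
    ∃ i, (↑[a, b, c, d] : Multiset ℕ) ∈ shapeClass k i := by
  rcases Nat.eq_zero_or_pos a with rfl | ha
  · rcases Nat.eq_zero_or_pos b with rfl | hb
    · rcases Nat.eq_zero_or_pos c with rfl | hc
      · rcases Nat.eq_zero_or_pos d with rfl | hd
        · simp at hsum; omega
        · exact ((h d hd).1 (by linarith)).elim
      · rcases hcd.eq_or_lt with rfl | hcd
        · exact ((h c hc).2.1 (by linarith)).elim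
        · exact ⟨6, (c, d), by simp only [mem_ofPred_eq]; omega, rfl⟩
    · rcases hbc.eq_or_lt with rfl | hbc
      · rcases hcd.eq_or_lt with rfl | hcd
        · exact ((h b hb).2.2.1 (by linarith)).elim
        · exact ⟨5, (d, b), by simp only [mem_ofPred_eq]; omega,
            Multiset.coe_eq_coe.2 (.cons 0 (List.perm_append_comm (l₁ := [d]) (l₂ := [b, b])))⟩
      · rcases hcd.eq_or_lt with rfl | hcd
        · exact ⟨5, (b, c), by simp only [mem_ofPred_eq]; omega, rfl⟩
        · exact ⟨4, (b, c, d), by simp only [mem_ofPred_eq]; omega, rfl⟩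
  · rcases hab.eq_or_lt with rfl | hab
    · rcases hbc.eq_or_lt with rfl | hbc
      · rcases hcd.eq_or_lt with rfl | hcd
        · exact ((h a ha).2.2.2 (by linarith)).elim
        · exact ⟨3, (d, a), by simp only [mem_ofPred_eq]; omega,
            Multiset.coe_eq_coe.2 (List.perm_append_comm (l₁ := [d]) (l₂ := [a, a, a]))⟩
      · rcases hcd.eq_or_lt with rfl | hcd
        · exact ⟨2, (a, c), by simp only [mem_ofPred_eq]; omega, rfl⟩
        · exact ⟨1, (c, d, a), by simp only [mem_ofPred_eq]; omega,
            Multiset.coe_eq_coe.2 (List.perm_append_comm (l₁ := [c, d]) (l₂ := [a, a]))⟩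
    · rcases hbc.eq_or_lt with rfl | hbc
      · rcases hcd.eq_or_lt with rfl | hcd
        · exact ⟨3, (a, b), by simp only [mem_ofPred_eq]; omega, rfl⟩
        · exact ⟨1, (a, d, b), by simp only [mem_ofPred_eq]; omega,
            Multiset.coe_eq_coe.2 (.cons a (List.perm_append_comm (l₁ := [d]) (l₂ := [b, b])))⟩
      · rcases hcd.eq_or_lt with rfl | hcd
        · exact ⟨1, (a, b, c), by simp only [mem_ofPred_eq]; omega, rfl⟩
        · exact ⟨0, (a, b, c, d), by simp only [mem_ofPred_eq]; omega, rfl⟩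

lemma exists_mem_shapeClass {k : ℕ} (hk : 0 < k)
    (h : ∀ m : ℕ, 0 < m → k ≠ m ^ 2 ∧ k ≠ 2 * m ^ 2 ∧ k ≠ 3 * m ^ 2 ∧ k ≠ 4 * m ^ 2)
    (q : ℤ × ℤ × ℤ × ℤ) (hq : sumSq (absValues q) = k) : ∃ i, absValues q ∈ shapeClass k i := by
  obtain ⟨a, b, c, d, hab, hbc, hcd, hq'⟩ := exists_sorted_eq_absValues q
  rw [hq'] at hq ⊢
  exact exists_mem_shapeClass_of_sorted hk h hab hbc hcd (by simpa [sumSq, add_assoc] using hq)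

theorem stmt10 (k : ℕ) (hk : 0 < k)
    (h : ∀ m : ℕ, 0 < m → k ≠ m ^ 2 ∧ k ≠ 2 * m ^ 2 ∧ k ≠ 3 * m ^ 2 ∧ k ≠ 4 * m ^ 2) :
    (384 * L4 k : ℤ) =
      N4 k - 192 * L112 k - 192 * L3 k - 48 * L2 k - 96 * L12 k - 64 * L13 k - 96 * L2half k := by
  have hN := N4_eq_sum_ncard (shapeClass k)
    (pairwise_disjoint_of_key shapeKey _ (by decide) fun i _ hm => (shapeClass_subset k i hm).2)
    (fun i _ hm => (shapeClass_subset k i hm).1) (exists_mem_shapeClass hk h)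
  simp only [Fin.sum_univ_seven, shapeClass, Matrix.cons_val] at hN
  rw [ncard_preimage_classL4, ncard_preimage_classL112, ncard_preimage_classL2half,
    ncard_preimage_classL13, ncard_preimage_classL3, ncard_preimage_classL12,
    ncard_preimage_classL2] at hN
  rw [hN]; push_cast; ring
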